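/- If S is a Poisson random variable with mean c, then for every natural number N ≥ 1, c^N E[1/(1+S)^N] → 1 as c → ∞. -/

import Mathlib

/-!
Writing `p_c(k) = e^{-c} c^k / k!`, the identity `(k + N)! = k! ∏_{j<N} (k + 1 + j)` gives
`c^N p_c(k) / (1 + k)^N = p_c(k + N) ∏_{j<N} (1 + j / (k + 1))`. So `c^N E[1/(1+S)^N]` is an
average of the weights `∏_{j<N} (1 + j / (k + 1))`, which tend to `1` as `k → ∞`, against the
shifted Poisson masses `p_c(k + N)`. As `c → ∞` these masses tend to `0` for each fixed `k` while
their total `1 - ∑_{m<N} p_c(m)` tends to `1`, so the average tends to `1`.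
-/

open Filter Finset MeasureTheory ProbabilityTheory Topology
open scoped NNReal Nat

lemma abs_tsum_mul_le_sum_range_add {q v : ℕ → ℝ} (hq : ∀ k, 0 ≤ q k) (hq_sum : Summable q)
    (hqv : Summable fun k => q k * v k) {M : ℕ} {δ : ℝ} (hv : ∀ k ≥ M, |v k| ≤ δ) :
    |∑' k, q k * v k| ≤ ∑ k ∈ range M, q k * |v k| + δ * ∑' k, q k := by
  have habs : ∀ k, |q k * v k| = q k * |v k| := fun k => by rw [abs_mul, abs_of_nonneg (hq k)]
  have hqv_abs : Summable fun k => q k * |v k| := by simpa only [habs] using hqv.abs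
  have hδ : 0 ≤ δ := (abs_nonneg _).trans (hv M le_rfl)
  calc |∑' k, q k * v k| ≤ ∑' k, q k * |v k| := by
        simpa only [Real.norm_eq_abs, habs] using norm_tsum_le_tsum_norm hqv.norm
    _ = ∑ k ∈ range M, q k * |v k| + ∑' k, q (k + M) * |v (k + M)| :=
        (hqv_abs.sum_add_tsum_nat_add M).symm
    _ ≤ ∑ k ∈ range M, q k * |v k| + ∑' k, δ * q (k + M) := by
        refine add_le_add_right (((summable_nat_add_iff M).2 hqv_abs).tsum_le_tsum (fun k => ?_)
          (((summable_nat_add_iff M).2 hq_sum).mul_left δ)) _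
        rw [mul_comm δ]
        exact mul_le_mul_of_nonneg_left (hv _ (Nat.le_add_left M k)) (hq _)
    _ ≤ ∑ k ∈ range M, q k * |v k| + δ * ∑' k, q k := by
        rw [tsum_mul_left]
        exact add_le_add_right (mul_le_mul_of_nonneg_left
          (tsum_comp_le_tsum_of_inj hq_sum hq (add_left_injective M)) hδ) _

/-- Silverman–Toeplitz theorem for a nonnegative summation kernel. -/
theorem tendsto_tsum_mul_of_tendsto {ι : Type*} {l : Filter ι} {q : ι → ℕ → ℝ} {w : ℕ → ℝ}
    {L : ℝ} (hq : ∀ i k, 0 ≤ q i k) (hq_sum : ∀ i, Summable (q i))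
    (hmass : Tendsto (fun i => ∑' k, q i k) l (𝓝 1))
    (hpt : ∀ k, Tendsto (fun i => q i k) l (𝓝 0)) (hw : Tendsto w atTop (𝓝 L)) :
    Tendsto (fun i => ∑' k, q i k * w k) l (𝓝 L) := by
  set v := fun k => w k - L
  have hv : Tendsto v atTop (𝓝 0) := by simpa using hw.sub_const L
  obtain ⟨B, hB⟩ : ∃ B, ∀ k, |v k| ≤ B := by
    obtain ⟨B, hB⟩ := isBounded_iff_forall_norm_le.1 (Metric.isBounded_range_of_tendsto v hv)
    exact ⟨B, fun k => hB _ ⟨k, rfl⟩⟩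
  have hqv i : Summable fun k => q i k * v k := by
    refine ((hq_sum i).mul_right B).of_norm_bounded fun k => ?_
    rw [Real.norm_eq_abs, abs_mul, abs_of_nonneg (hq i k)]
    exact mul_le_mul_of_nonneg_left (hB k) (hq i k)
  have hsplit i : ∑' k, q i k * w k = ∑' k, q i k * v k + L * ∑' k, q i k := by
    rw [← tsum_mul_left, ← (hqv i).tsum_add ((hq_sum i).mul_left L)]
    congr with k
    ring
  suffices Tendsto (fun i => ∑' k, q i k * v k) l (𝓝 0) by
    simpa [hsplit] using this.add (hmass.const_mul L)
  rw [Metric.tendsto_nhds]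
  intro ε hε
  have hv_abs : Tendsto (fun k => |v k|) atTop (𝓝 0) := by simpa using hv.abs
  obtain ⟨M, hM⟩ : ∃ M, ∀ k ≥ M, |v k| ≤ ε / 4 :=
    eventually_atTop.1 <| hv_abs.eventually (eventually_le_nhds (by positivity))
  have hhead : Tendsto (fun i => ∑ k ∈ range M, q i k * |v k|) l (𝓝 0) := by
    simpa using tendsto_finsetSum _ fun k _ => (hpt k).mul_const |v k|
  filter_upwards [hhead.eventually (gt_mem_nhds (half_pos hε)),
    hmass.eventually (gt_mem_nhds one_lt_two)] with i hhead_i hmass_i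
  rw [Real.dist_eq, sub_zero]
  calc |∑' k, q i k * v k| ≤ ∑ k ∈ range M, q i k * |v k| + ε / 4 * ∑' k, q i k :=
        abs_tsum_mul_le_sum_range_add (hq i) (hq_sum i) (hqv i) hM
    _ < ε / 2 + ε / 4 * 2 := by gcongr
    _ = ε := by ring

theorem tendsto_tsum_nat_add_of_hasSum_one {ι : Type*} {l : Filter ι} {p : ι → ℕ → ℝ}
    (hp : ∀ i, HasSum (p i) 1) (hpt : ∀ k, Tendsto (fun i => p i k) l (𝓝 0)) (N : ℕ) :
    Tendsto (fun i => ∑' k, p i (k + N)) l (𝓝 1) := by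
  have htail i : ∑' k, p i (k + N) = 1 - ∑ k ∈ range N, p i k := by
    rw [← (hp i).tsum_eq, ← (hp i).summable.sum_add_tsum_nat_add N, add_sub_cancel_left]
  simpa [htail] using tendsto_const_nhds.sub (tendsto_finsetSum (range N) fun k _ => hpt k)

lemma hasSum_poissonMeasure_real_singleton (c : ℝ≥0) :
    HasSum (fun n => (poissonMeasure c).real {n}) 1 := by
  simpa only [poissonMeasure_real_singleton] using hasSum_one_poissonMeasure c

lemma tendsto_poissonMeasure_real_singleton_atTop (n : ℕ) :
    Tendsto (fun c : ℝ≥0 => (poissonMeasure c).real {n}) atTop (𝓝 0) := by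
  have h := ((Real.tendsto_pow_mul_exp_neg_atTop_nhds_zero n).comp
    (NNReal.tendsto_coe_atTop.2 tendsto_id)).div_const (n ! : ℝ)
  simp_rw [poissonMeasure_real_singleton]
  simpa [mul_comm] using h

lemma pow_mul_poissonMeasure_real_singleton_div (c : ℝ≥0) (N k : ℕ) :
    (c : ℝ) ^ N * ((poissonMeasure c).real {k} * (1 / (1 + k) ^ N)) =
      (poissonMeasure c).real {k + N} * ∏ j ∈ range N, (1 + j / (k + 1 : ℝ)) := by
  have hprod : ∏ j ∈ range N, (1 + j / (k + 1 : ℝ)) =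
      (∏ j ∈ range N, ((k + 1 : ℕ) + j : ℝ)) / (k + 1) ^ N :=
    calc ∏ j ∈ range N, (1 + j / (k + 1 : ℝ))
        = ∏ j ∈ range N, (((k + 1 : ℕ) + j : ℝ) / (k + 1)) :=
          prod_congr rfl fun j _ => by push_cast; field_simp
      _ = _ := by rw [prod_div_distrib, prod_const, card_range]
  rw [hprod, poissonMeasure_real_singleton, poissonMeasure_real_singleton,
    ← Nat.factorial_mul_ascFactorial, Nat.ascFactorial_eq_prod_range]
  push_cast
  field_simp
  ring

lemma tendsto_prod_one_add_div_atTop (N : ℕ) :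
    Tendsto (fun k : ℕ => ∏ j ∈ range N, (1 + j / (k + 1 : ℝ))) atTop (𝓝 1) := by
  have hden : Tendsto (fun k : ℕ => (k + 1 : ℝ)) atTop atTop :=
    tendsto_atTop_add_const_right _ 1 tendsto_natCast_atTop_atTop
  simpa using tendsto_finsetProd (range N) fun j _ =>
    (tendsto_const_nhds (x := (j : ℝ)).div_atTop hden).const_add 1

theorem poisson_inv_moment_tendsto_one_general (N : ℕ) :
    Tendsto (fun c : NNReal =>
        (c : ℝ) ^ N * ∫ k : ℕ, 1 / (1 + (k : ℝ)) ^ N ∂(poissonMeasure c))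
      atTop (nhds 1) := by
  have hrepr (c : ℝ≥0) : (c : ℝ) ^ N * ∫ k : ℕ, 1 / (1 + (k : ℝ)) ^ N ∂(poissonMeasure c) =
      ∑' k, (poissonMeasure c).real {k + N} * ∏ j ∈ range N, (1 + j / (k + 1 : ℝ)) := by
    rw [integral_poissonMeasure, ← tsum_mul_left]
    congr with k
    rw [smul_eq_mul, ← poissonMeasure_real_singleton, pow_mul_poissonMeasure_real_singleton_div]
  simp_rw [hrepr]
  exact tendsto_tsum_mul_of_tendsto (fun _ _ => measureReal_nonneg)
    (fun c => (summable_nat_add_iff (f := fun n => (poissonMeasure c).real {n}) N).2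
      (hasSum_poissonMeasure_real_singleton c).summable)
    (tendsto_tsum_nat_add_of_hasSum_one hasSum_poissonMeasure_real_singleton
      tendsto_poissonMeasure_real_singleton_atTop N)
    (fun k => tendsto_poissonMeasure_real_singleton_atTop (k + N))
    (tendsto_prod_one_add_div_atTop N)

theorem poisson_inv_moment_tendsto_one (N : ℕ) (hN : 1 ≤ N) :
    Tendsto (fun c : NNReal =>
        (c : ℝ) ^ N * ∫ k : ℕ, 1 / (1 + (k : ℝ)) ^ N ∂(poissonMeasure c))
      atTop (nhds 1) :=
  poisson_inv_moment_tendsto_one_general N
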